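/- Let A be a C*-algebra and {p_i}_{i∈I} a family of mutually orthogonal projections in the multiplier algebra M(A). Let B be a *-subalgebra of A such that B ⊆ ⊕_{i,j∈I} B ∩ (p_i A p_j) (every b ∈ B is a finite sum of its components p_i b p_j, each lying in B), and such that B ∩ (p_i A p_i) is a core subalgebra of A for every i ∈ I. Then B is a core subalgebra of A. -/

import Mathlib

/-- A *-representation of the subset `S` of a C*-algebra on a Hilbert space `H`: a map
`π : S → B(H)` which is linear, multiplicative and *-preserving (the algebraic conditions
are stated conditionally so that no closure assumptions on `S` are required). -/
structure IsRepOn {A : Type*} [NonUnitalCStarAlgebra A]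
    {H : Type*} [NormedAddCommGroup H] [InnerProductSpace ℂ H] [CompleteSpace H]
    (S : Set A) (π : S → H →L[ℂ] H) : Prop where
  map_add : ∀ a b c : S, (a : A) + (b : A) = (c : A) → π c = π a + π b
  map_smul : ∀ (z : ℂ) (a b : S), z • (a : A) = (b : A) → π b = z • π a
  map_mul : ∀ a b c : S, (a : A) * (b : A) = (c : A) → π c = π a * π b
  map_star : ∀ a b : S, star (a : A) = (b : A) → π b = star (π a)

/-- `S` is a *core subalgebra* of the C*-algebra `A` if every *-representation of `S` on a
Hilbert space is continuous relative to the norm induced from `A`. -/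
def IsCore {A : Type*} [NonUnitalCStarAlgebra A] (S : Set A) : Prop :=
  ∀ (H : Type) [NormedAddCommGroup H] [InnerProductSpace ℂ H] [CompleteSpace H],
    ∀ π : S → H →L[ℂ] H, IsRepOn S π → Continuous π

open MultiplierAlgebra

/-- For `p` in the multiplier algebra `𝓜(ℂ, A)` and `b ∈ A`, the corner component
`p_i b p_j` of `b`. -/
noncomputable def corner {A : Type*} [NonUnitalCStarAlgebra A] {I : Type*}
    (p : I → 𝓜(ℂ, A)) (i j : I) (b : A) : A :=
  (p i).fst ((p j).snd b)

/-! ### Auxiliary lemmas -/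

section Aux

open DoubleCentralizer

lemma aux_norm_le_one_of_proj {M : Type*} [NormedRing M] [StarRing M] [CStarRing M]
    (m : M) (hsa : star m = m) (hid : m * m = m) : ‖m‖ ≤ 1 := by
  have h : ‖m‖ * ‖m‖ = ‖m‖ := by
    rw [← CStarRing.norm_star_mul_self, hsa, hid]
  nlinarith [norm_nonneg m]

lemma aux_le_of_forall_pow_le {t u K : ℝ} (hu : 0 ≤ u) (hK : 0 < K)
    (h : ∀ n : ℕ, t ^ (2 ^ n) ≤ K * u ^ (2 ^ n)) : t ≤ u := by
  by_contra hlt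
  push_neg at hlt
  rcases eq_or_lt_of_le hu with h0 | h0
  · have := h 0
    simp only [pow_zero, pow_one, ← h0] at this
    nlinarith
  · have hr : 1 < t / u := (one_lt_div h0).mpr hlt
    obtain ⟨n, hn⟩ := pow_unbounded_of_one_lt K hr
    have h1 : (t / u) ^ (2 ^ n) ≤ K := by
      rw [div_pow, div_le_iff₀ (by positivity)]
      exact h n
    have h2 : (t / u) ^ n ≤ (t / u) ^ (2 ^ n) :=
      pow_le_pow_right₀ hr.le (Nat.le_of_lt (Nat.lt_two_pow_self (n := n)))
    linarith

variable {A : Type*} [NonUnitalCStarAlgebra A]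

lemma aux_mulA_left_cancel (u v : A) (h : ∀ z, z * u = z * v) : u = v := by
  have h1 : star (u - v) * (u - v) = 0 := by
    have := h (star (u - v)); rw [mul_sub, this, sub_self]
  exact sub_eq_zero.mp (CStarRing.star_mul_self_eq_zero_iff _ |>.mp h1)

lemma aux_mulA_right_cancel (u v : A) (h : ∀ z, u * z = v * z) : u = v := by
  have h1 : (u - v) * star (u - v) = 0 := by
    have := h (star (u - v)); rw [sub_mul, this, sub_self]
  exact sub_eq_zero.mp (CStarRing.mul_star_self_eq_zero_iff _ |>.mp h1)

lemma aux_fst_mul' (m : 𝓜(ℂ, A)) (x y : A) : m.fst (x * y) = m.fst x * y := by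
  refine aux_mulA_left_cancel _ _ fun z => ?_
  rw [← m.central, ← mul_assoc, m.central, mul_assoc]

lemma aux_snd_mul' (m : 𝓜(ℂ, A)) (x y : A) : m.snd (x * y) = x * m.snd y := by
  refine aux_mulA_right_cancel _ _ fun z => ?_
  rw [m.central, mul_assoc, ← m.central, ← mul_assoc]

lemma aux_fst_snd_comm (m n : 𝓜(ℂ, A)) (x : A) : m.fst (n.snd x) = n.snd (m.fst x) := by
  refine aux_mulA_left_cancel _ _ fun z => ?_
  rw [← m.central, ← aux_snd_mul' n, m.central, aux_snd_mul']

lemma aux_star_fst' (m : 𝓜(ℂ, A)) (hm : star m = m) (x : A) :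
    star (m.fst x) = m.snd (star x) := by
  conv_lhs => rw [← hm]
  rw [star_fst, star_star]

lemma aux_star_snd' (m : 𝓜(ℂ, A)) (hm : star m = m) (x : A) :
    star (m.snd x) = m.fst (star x) := by
  conv_lhs => rw [← hm]
  rw [star_snd, star_star]

variable {I : Type*} (p : I → 𝓜(ℂ, A))

lemma aux_corner_smul (i j : I) (z : ℂ) (b : A) :
    corner p i j (z • b) = z • corner p i j b := by
  simp [corner, map_smul]

lemma aux_corner_zero (i j : I) : corner p i j (0 : A) = 0 := by simp [corner]

lemma aux_corner_mul (i j : I) (b c : A) :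
    corner p i j (b * c) = (p i).fst b * (p j).snd c := by
  rw [corner, aux_snd_mul', aux_fst_mul']

lemma aux_corner_star (hsa : ∀ i, star (p i) = p i) (i j : I) (b : A) :
    corner p i j (star b) = star (corner p j i b) := by
  rw [corner, corner, aux_star_fst' _ (hsa j), aux_star_snd' _ (hsa i), aux_fst_snd_comm]

lemma aux_corner_mul_star_self (hsa : ∀ i, star (p i) = p i)
    (hidem : ∀ i, p i * p i = p i) (i j : I) (b : A) :
    corner p i i (corner p i j b * star (corner p i j b)) =
      corner p i j b * star (corner p i j b) := by
  set x := corner p i j b with hx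
  have hsx : star x = (p i).snd ((p j).fst (star b)) := by
    rw [hx, corner, aux_star_fst' _ (hsa i), aux_star_snd' _ (hsa j)]
  have h1 : (p i).snd (x * star x) = x * star x := by
    rw [aux_snd_mul', hsx]
    congr 1
    have : (p i).snd ((p i).snd ((p j).fst (star b)))
        = ((p i * p i).snd) ((p j).fst (star b)) := by
      rw [mul_snd]; rfl
    rw [this, hidem]
  have h2 : (p i).fst x = x := by
    rw [hx, corner]
    have : (p i).fst ((p i).fst ((p j).snd b)) = ((p i * p i).fst) ((p j).snd b) := by
      rw [mul_fst]; rfl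
    rw [this, hidem]
  rw [corner, h1, aux_fst_mul', h2]

lemma aux_fst_eq_zero_of_corners (hidem : ∀ i, p i * p i = p i)
    (horth : ∀ i j, i ≠ j → p i * p j = 0) (i : I) (b : A)
    (hfin : {ij : I × I | corner p ij.1 ij.2 b ≠ 0}.Finite)
    (hdec : b = ∑ᶠ ij : I × I, corner p ij.1 ij.2 b)
    (h : ∀ l, corner p i l b = 0) : (p i).fst b = 0 := by
  conv_lhs => rw [hdec]
  have hmap : (p i).fst (∑ᶠ ij : I × I, corner p ij.1 ij.2 b)
      = ∑ᶠ ij : I × I, (p i).fst (corner p ij.1 ij.2 b) :=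
    AddMonoidHom.map_finsum ((p i).fst.toLinearMap.toAddMonoidHom) hfin
  rw [hmap]
  refine finsum_eq_zero_of_forall_eq_zero fun kl => ?_
  have : (p i).fst (corner p kl.1 kl.2 b) = ((p i * p kl.1).fst) ((p kl.2).snd b) := by
    rw [corner, mul_fst]; rfl
  rw [this]
  rcases eq_or_ne i kl.1 with h1 | h1
  · rw [← h1, hidem]; exact h kl.2
  · rw [horth _ _ h1, zero_fst]; rfl

lemma aux_snd_eq_zero_of_corners (hidem : ∀ i, p i * p i = p i)
    (horth : ∀ i j, i ≠ j → p i * p j = 0) (j : I) (b : A)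
    (hfin : {ij : I × I | corner p ij.1 ij.2 b ≠ 0}.Finite)
    (hdec : b = ∑ᶠ ij : I × I, corner p ij.1 ij.2 b)
    (h : ∀ k, corner p k j b = 0) : (p j).snd b = 0 := by
  conv_lhs => rw [hdec]
  have hmap : (p j).snd (∑ᶠ ij : I × I, corner p ij.1 ij.2 b)
      = ∑ᶠ ij : I × I, (p j).snd (corner p ij.1 ij.2 b) :=
    AddMonoidHom.map_finsum ((p j).snd.toLinearMap.toAddMonoidHom) hfin
  rw [hmap]
  refine finsum_eq_zero_of_forall_eq_zero fun kl => ?_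
  have : (p j).snd (corner p kl.1 kl.2 b) = (p kl.1).fst (((p kl.2 * p j).snd) b) := by
    rw [corner, ← aux_fst_snd_comm, mul_snd]; rfl
  rw [this]
  rcases eq_or_ne kl.2 j with h1 | h1
  · rw [h1, hidem]; exact h kl.1
  · rw [horth _ _ h1, zero_snd]; simp

lemma aux_corner_norm_le (hsa : ∀ i, star (p i) = p i) (hidem : ∀ i, p i * p i = p i)
    (i j : I) (b : A) : ‖corner p i j b‖ ≤ ‖b‖ := by
  have hpi : ‖p i‖ ≤ 1 := aux_norm_le_one_of_proj (p i) (hsa i) (hidem i)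
  have hpj : ‖p j‖ ≤ 1 := aux_norm_le_one_of_proj (p j) (hsa j) (hidem j)
  calc ‖(p i).fst ((p j).snd b)‖ ≤ ‖(p i).fst‖ * ‖(p j).snd b‖ :=
        (p i).fst.le_opNorm _
    _ ≤ 1 * ‖(p j).snd b‖ :=
        mul_le_mul_of_nonneg_right (by rw [norm_fst]; exact hpi) (norm_nonneg _)
    _ = ‖(p j).snd b‖ := one_mul _
    _ ≤ ‖(p j).snd‖ * ‖b‖ := (p j).snd.le_opNorm _
    _ ≤ 1 * ‖b‖ :=
        mul_le_mul_of_nonneg_right (by rw [norm_snd]; exact hpj) (norm_nonneg _)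
    _ = ‖b‖ := one_mul _

end Aux

section RepAux

variable {A : Type*} [NonUnitalCStarAlgebra A]
    {H : Type*} [NormedAddCommGroup H] [InnerProductSpace ℂ H] [CompleteSpace H]
    {S : Set A} {π : S → H →L[ℂ] H}

lemma IsRepOn.pi_zero (hπ : IsRepOn S π) (h0 : (0 : A) ∈ S) : π ⟨0, h0⟩ = 0 := by
  have h := hπ.map_add ⟨0, h0⟩ ⟨0, h0⟩ ⟨0, h0⟩ (by simp)
  have h2 : π ⟨0, h0⟩ + π ⟨0, h0⟩ = π ⟨0, h0⟩ := h.symm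
  simpa using congrArg (fun t => t - π ⟨0, h0⟩) h2

lemma IsRepOn.pi_sum (hπ : IsRepOn S π) (h0 : (0 : A) ∈ S)
    (hadd : ∀ {x y : A}, x ∈ S → y ∈ S → x + y ∈ S)
    {κ : Type*} (s : Finset κ) (g : κ → A) (hg : ∀ x, g x ∈ S) :
    ∀ hs : (∑ x ∈ s, g x) ∈ S, π ⟨∑ x ∈ s, g x, hs⟩ = ∑ x ∈ s, π ⟨g x, hg x⟩ := by
  classical
  have hsum : ∀ t : Finset κ, (∑ x ∈ t, g x) ∈ S := by
    intro t
    induction t using Finset.cons_induction with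
    | empty => simpa using h0
    | cons a t ha ih => rw [Finset.sum_cons]; exact hadd (hg a) ih
  induction s using Finset.cons_induction with
  | empty =>
    intro hs
    have he : (⟨∑ x ∈ (∅ : Finset κ), g x, hs⟩ : S) = ⟨0, h0⟩ := Subtype.ext (by simp)
    rw [he, hπ.pi_zero h0, Finset.sum_empty]
  | cons a t ha ih =>
    intro hs
    have h1 : (g a) + (∑ x ∈ t, g x) = ((⟨∑ x ∈ Finset.cons a t ha, g x, hs⟩ : S) : A) :=
      (Finset.sum_cons ha).symm
    rw [hπ.map_add ⟨g a, hg a⟩ ⟨∑ x ∈ t, g x, hsum t⟩ ⟨_, hs⟩ h1, ih (hsum t),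
      Finset.sum_cons]

end RepAux

/-- Iterated squaring, used for powers `d ^ (2 ^ n)` in a non-unital algebra. -/
def iterSq {A : Type*} [Mul A] (d : A) : ℕ → A
  | 0 => d
  | n + 1 => iterSq d n * iterSq d n

/-- Let `A` be a C*-algebra, `{p_i}` a family of mutually orthogonal projections in the
multiplier algebra `M(A)`, and `B` a *-subalgebra of `A` such that every `b ∈ B` is the
(finite) sum of its components `p_i b p_j`, each of which lies in `B`.  If every
`B ∩ (p_i A p_i)` is a core subalgebra of `A`, then `B` is a core subalgebra of `A`. -/
theorem isCore_of_corners {A : Type*} [NonUnitalCStarAlgebra A] {I : Type*}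
    (p : I → 𝓜(ℂ, A))
    (hsa : ∀ i, star (p i) = p i) (hidem : ∀ i, p i * p i = p i)
    (horth : ∀ i j, i ≠ j → p i * p j = 0)
    (B : NonUnitalStarSubalgebra ℂ A)
    (hfin : ∀ b ∈ B, {ij : I × I | corner p ij.1 ij.2 b ≠ 0}.Finite)
    (hdecomp : ∀ b ∈ B, b = ∑ᶠ ij : I × I, corner p ij.1 ij.2 b)
    (hmem : ∀ b ∈ B, ∀ i j, corner p i j b ∈ B)
    (hcorner : ∀ i, IsCore {a ∈ (B : Set A) | corner p i i a = a}) :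
    IsCore (B : Set A) := by
  classical
  intro H _ _ _ π hπ
  have h0S : (0 : A) ∈ (B : Set A) := zero_mem B
  -- Step 1: each corner gives a linear bound for π
  have step1 : ∀ i : I, ∃ C : ℝ, 1 ≤ C ∧ ∀ (a : A) (ha : a ∈ (B : Set A)),
      corner p i i a = a → ‖π ⟨a, ha⟩‖ ≤ C * ‖a‖ := by
    intro i
    set T : Set A := {a ∈ (B : Set A) | corner p i i a = a} with hT
    let π' : T → H →L[ℂ] H := fun a => π ⟨a.1, a.2.1⟩
    have hπ' : IsRepOn T π' := by
      constructor
      · exact fun a b c h => hπ.map_add ⟨a.1, a.2.1⟩ ⟨b.1, b.2.1⟩ ⟨c.1, c.2.1⟩ h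
      · exact fun z a b h => hπ.map_smul z ⟨a.1, a.2.1⟩ ⟨b.1, b.2.1⟩ h
      · exact fun a b c h => hπ.map_mul ⟨a.1, a.2.1⟩ ⟨b.1, b.2.1⟩ ⟨c.1, c.2.1⟩ h
      · exact fun a b h => hπ.map_star ⟨a.1, a.2.1⟩ ⟨b.1, b.2.1⟩ h
    have hcont : Continuous π' := hcorner i H π' hπ'
    have h0T : (0 : A) ∈ T := ⟨h0S, aux_corner_zero p i i⟩
    have hπ'0 : π' ⟨0, h0T⟩ = 0 := hπ.pi_zero h0S
    have hc0 : ContinuousAt π' ⟨0, h0T⟩ := hcont.continuousAt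
    rw [Metric.continuousAt_iff] at hc0
    obtain ⟨δ, hδ, hball⟩ := hc0 1 one_pos
    refine ⟨max 1 (2 / δ), le_max_left _ _, ?_⟩
    intro a ha hc
    rcases eq_or_ne a 0 with rfl | hne
    · have : π ⟨0, ha⟩ = 0 := hπ.pi_zero h0S
      rw [this]
      simp
    · have hna : 0 < ‖a‖ := norm_pos_iff.mpr hne
      set z : ℂ := ((δ / (2 * ‖a‖) : ℝ) : ℂ) with hz
      have hzb : z • a ∈ (B : Set A) := by
        exact SMulMemClass.smul_mem z ha
      have hza : z • a ∈ T := ⟨hzb, by rw [aux_corner_smul, hc]⟩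
      have hznorm : ‖z‖ = δ / (2 * ‖a‖) := by
        rw [hz, Complex.norm_real, Real.norm_of_nonneg (by positivity)]
      have h1 : dist (⟨z • a, hza⟩ : T) ⟨0, h0T⟩ < δ := by
        rw [Subtype.dist_eq, dist_zero_right, norm_smul, hznorm]
        rw [div_mul_eq_mul_div, mul_comm]
        rw [div_lt_iff₀ (by positivity)]
        nlinarith
      have h2 := hball h1
      rw [hπ'0, dist_zero_right] at h2
      have h3 : π ⟨z • a, hzb⟩ = z • π ⟨a, ha⟩ := hπ.map_smul z ⟨a, ha⟩ ⟨z • a, hzb⟩ rfl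
      have h4 : ‖π' ⟨z • a, hza⟩‖ = ‖z‖ * ‖π ⟨a, ha⟩‖ := by
        show ‖π ⟨z • a, hzb⟩‖ = _
        rw [h3, norm_smul]
      rw [h4, hznorm] at h2
      have h5 : ‖π ⟨a, ha⟩‖ < 2 / δ * ‖a‖ := by
        rw [div_mul_eq_mul_div, mul_comm] at h2
        rw [div_lt_iff₀ (by positivity)] at h2
        rw [div_mul_eq_mul_div, lt_div_iff₀ hδ]
        nlinarith
      calc ‖π ⟨a, ha⟩‖ ≤ 2 / δ * ‖a‖ := h5.le
        _ ≤ max 1 (2 / δ) * ‖a‖ := by gcongr; exact le_max_right _ _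
  choose C hC1 hC2 using step1
  -- Step 2: bound for a single corner component
  have cornerBound : ∀ (b : A) (hb : b ∈ (B : Set A)) (i j : I),
      ‖π ⟨corner p i j b, hmem b hb i j⟩‖ ≤ C i * ‖b‖ := by
    intro b hb i j
    set x := corner p i j b with hxdef
    have hx : x ∈ (B : Set A) := hmem b hb i j
    have hxs : star x ∈ (B : Set A) := star_mem hx
    have hy : x * star x ∈ (B : Set A) := mul_mem hx hxs
    have hcy : corner p i i (x * star x) = x * star x :=
      aux_corner_mul_star_self p hsa hidem i j b
    have h1 : ‖π ⟨x * star x, hy⟩‖ ≤ C i * ‖x * star x‖ := hC2 i _ hy hcy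
    have h2 : π ⟨star x, hxs⟩ = star (π ⟨x, hx⟩) := hπ.map_star ⟨x, hx⟩ _ rfl
    have h3 : π ⟨x * star x, hy⟩ = π ⟨x, hx⟩ * star (π ⟨x, hx⟩) := by
      rw [← h2]; exact hπ.map_mul ⟨x, hx⟩ ⟨star x, hxs⟩ _ rfl
    have h4 : ‖π ⟨x, hx⟩‖ * ‖π ⟨x, hx⟩‖ ≤ C i * (‖x‖ * ‖x‖) := by
      calc ‖π ⟨x, hx⟩‖ * ‖π ⟨x, hx⟩‖ = ‖π ⟨x, hx⟩ * star (π ⟨x, hx⟩)‖ :=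
            (CStarRing.norm_self_mul_star).symm
        _ = ‖π ⟨x * star x, hy⟩‖ := by rw [h3]
        _ ≤ C i * ‖x * star x‖ := h1
        _ = C i * (‖x‖ * ‖x‖) := by rw [CStarRing.norm_self_mul_star]
    have h5 : ‖π ⟨x, hx⟩‖ ≤ C i * ‖x‖ := by
      have hCx : 0 ≤ C i * ‖x‖ := mul_nonneg (le_trans zero_le_one (hC1 i)) (norm_nonneg _)
      have hsq : ‖π ⟨x, hx⟩‖ ^ 2 ≤ (C i * ‖x‖) ^ 2 := by
        nlinarith [hC1 i, norm_nonneg x, h4]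
      exact (pow_le_pow_iff_left₀ (norm_nonneg _) hCx two_ne_zero).mp hsq
    have hxb : ‖x‖ ≤ ‖b‖ := aux_corner_norm_le p hsa hidem i j b
    calc ‖π ⟨x, hx⟩‖ ≤ C i * ‖x‖ := h5
      _ ≤ C i * ‖b‖ := by gcongr; exact le_trans zero_le_one (hC1 i)
  -- Step 3: bound in terms of a finset covering the support
  have step3 : ∀ (b : A) (hb : b ∈ (B : Set A)) (s : Finset (I × I)),
      {ij : I × I | corner p ij.1 ij.2 b ≠ 0} ⊆ ↑s →
      ‖π ⟨b, hb⟩‖ ≤ (∑ ij ∈ s, C ij.1) * ‖b‖ := by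
    intro b hb s hsupp
    have hsum : b = ∑ ij ∈ s, corner p ij.1 ij.2 b := by
      conv_lhs => rw [hdecomp b hb]
      exact finsum_eq_sum_of_support_subset _ hsupp
    have hb2 : (∑ ij ∈ s, corner p ij.1 ij.2 b) ∈ (B : Set A) := hsum ▸ hb
    have hmemS : ∀ ij : I × I, corner p ij.1 ij.2 b ∈ (B : Set A) :=
      fun ij => hmem b hb ij.1 ij.2
    have hps := hπ.pi_sum h0S (fun hx hy => add_mem hx hy) s
      (fun ij => corner p ij.1 ij.2 b) hmemS hb2
    calc ‖π ⟨b, hb⟩‖ = ‖∑ ij ∈ s, π ⟨corner p ij.1 ij.2 b, hmemS ij⟩‖ := by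
          rw [show (⟨b, hb⟩ : (B : Set A)) = ⟨_, hb2⟩ from Subtype.ext hsum, hps]
      _ ≤ ∑ ij ∈ s, ‖π ⟨corner p ij.1 ij.2 b, hmemS ij⟩‖ := norm_sum_le _ _
      _ ≤ ∑ ij ∈ s, C ij.1 * ‖b‖ := Finset.sum_le_sum fun ij _ => cornerBound b hb ij.1 ij.2
      _ = (∑ ij ∈ s, C ij.1) * ‖b‖ := (Finset.sum_mul _ _ _).symm
  -- support-confinement predicate
  set P : Finset I → A → Prop :=
    fun G b => ∀ i j, corner p i j b ≠ 0 → i ∈ G ∧ j ∈ G with hP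
  have Pmul : ∀ (G : Finset I) (b c : A), b ∈ (B : Set A) → c ∈ (B : Set A) →
      P G b → P G c → P G (b * c) := by
    intro G b c hb hc hPb hPc i j hne
    rw [aux_corner_mul] at hne
    have h1 : (p i).fst b ≠ 0 := fun h => hne (by rw [h, zero_mul])
    have h2 : (p j).snd c ≠ 0 := fun h => hne (by rw [h, mul_zero])
    constructor
    · by_contra hiG
      refine h1 (aux_fst_eq_zero_of_corners p hidem horth i b (hfin b hb)
        (hdecomp b hb) fun l => ?_)
      by_contra hcl
      exact hiG (hPb i l hcl).1
    · by_contra hjG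
      refine h2 (aux_snd_eq_zero_of_corners p hidem horth j c (hfin c hc)
        (hdecomp c hc) fun k => ?_)
      by_contra hck
      exact hjG (hPc k j hck).2
  -- Step 5: contractivity on self-adjoint elements
  have sa_bound : ∀ (d : A) (hd : d ∈ (B : Set A)), star d = d →
      ‖π ⟨d, hd⟩‖ ≤ ‖d‖ := by
    intro d hd hsd
    rcases eq_or_ne d 0 with rfl | hd0
    · rw [hπ.pi_zero h0S]; simp
    set G : Finset I := ((hfin d hd).toFinset.image Prod.fst) ∪
      ((hfin d hd).toFinset.image Prod.snd) with hG
    have hPd : P G d := by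
      intro i j hne
      have hij : (i, j) ∈ (hfin d hd).toFinset := (hfin d hd).mem_toFinset.mpr hne
      exact ⟨Finset.mem_union_left _ (Finset.mem_image.mpr ⟨(i, j), hij, rfl⟩),
        Finset.mem_union_right _ (Finset.mem_image.mpr ⟨(i, j), hij, rfl⟩)⟩
    set K : ℝ := ∑ ij ∈ G ×ˢ G, C ij.1 with hK
    have hKpos : 0 < K := by
      obtain ⟨ij, hij⟩ : ∃ ij : I × I, corner p ij.1 ij.2 d ≠ 0 := by
        by_contra hall
        push_neg at hall
        exact hd0 ((hdecomp d hd).trans (finsum_eq_zero_of_forall_eq_zero hall))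
      have hijG : ij ∈ G ×ˢ G := Finset.mem_product.mpr
        ⟨(hPd ij.1 ij.2 hij).1, (hPd ij.1 ij.2 hij).2⟩
      have h1 : (1 : ℝ) ≤ C ij.1 := hC1 _
      have h2 : C ij.1 ≤ K := Finset.single_le_sum
        (fun kl _ => le_trans zero_le_one (hC1 kl.1)) hijG
      linarith
    -- the iterated squares
    have key : ∀ n : ℕ, ∃ h : iterSq d n ∈ (B : Set A), P G (iterSq d n) ∧
        star (iterSq d n) = iterSq d n ∧ ‖iterSq d n‖ = ‖d‖ ^ (2 ^ n) ∧
        ‖π ⟨iterSq d n, h⟩‖ = ‖π ⟨d, hd⟩‖ ^ (2 ^ n) := by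
      intro n
      induction n with
      | zero => exact ⟨hd, hPd, hsd, by simp [iterSq], by simp [iterSq]⟩
      | succ n ih =>
        obtain ⟨h, hPn, hst, hnrm, hπn⟩ := ih
        have hmm : iterSq d (n + 1) ∈ (B : Set A) := mul_mem h h
        refine ⟨hmm, Pmul G _ _ h h hPn hPn, ?_, ?_, ?_⟩
        · show star (iterSq d n * iterSq d n) = iterSq d n * iterSq d n
          rw [star_mul, hst]
        · show ‖iterSq d n * iterSq d n‖ = ‖d‖ ^ 2 ^ (n + 1)
          conv_lhs => rw [show iterSq d n * iterSq d n
            = iterSq d n * star (iterSq d n) by rw [hst]]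
          rw [CStarRing.norm_self_mul_star, hnrm, pow_succ, pow_mul]
          ring
        · have hmul : π ⟨iterSq d (n + 1), hmm⟩ = π ⟨iterSq d n, h⟩ * π ⟨iterSq d n, h⟩ :=
            hπ.map_mul ⟨iterSq d n, h⟩ ⟨iterSq d n, h⟩ _ rfl
          have hstπ : π ⟨iterSq d n, h⟩ = star (π ⟨iterSq d n, h⟩) := by
            have := hπ.map_star ⟨iterSq d n, h⟩ ⟨iterSq d n, h⟩ (by rw [hst])
            exact this
          rw [hmul]
          conv_lhs => rw [show π ⟨iterSq d n, h⟩ * π ⟨iterSq d n, h⟩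
            = π ⟨iterSq d n, h⟩ * star (π ⟨iterSq d n, h⟩) by rw [← hstπ]]
          rw [CStarRing.norm_self_mul_star, hπn, pow_succ, pow_mul]
          ring
    have hbound : ∀ n : ℕ, ‖π ⟨d, hd⟩‖ ^ (2 ^ n) ≤ K * ‖d‖ ^ (2 ^ n) := by
      intro n
      obtain ⟨h, hPn, _, hnrm, hπn⟩ := key n
      have hsub : {ij : I × I | corner p ij.1 ij.2 (iterSq d n) ≠ 0} ⊆ ↑(G ×ˢ G) := by
        intro ij hij
        exact Finset.mem_coe.mpr (Finset.mem_product.mpr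
          ⟨(hPn ij.1 ij.2 hij).1, (hPn ij.1 ij.2 hij).2⟩)
      have := step3 (iterSq d n) h (G ×ˢ G) hsub
      rw [hπn, hnrm] at this
      exact this
    exact aux_le_of_forall_pow_le (norm_nonneg _) hKpos hbound
  -- Step 6: contractivity everywhere
  have contr : ∀ (c : A) (hc : c ∈ (B : Set A)), ‖π ⟨c, hc⟩‖ ≤ ‖c‖ := by
    intro c hc
    have hcs : star c ∈ (B : Set A) := star_mem hc
    have hd : c * star c ∈ (B : Set A) := mul_mem hc hcs
    have hsd : star (c * star c) = c * star c := by simp [star_mul]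
    have h1 := sa_bound _ hd hsd
    have h2 : π ⟨c * star c, hd⟩ = π ⟨c, hc⟩ * star (π ⟨c, hc⟩) := by
      have hst : π ⟨star c, hcs⟩ = star (π ⟨c, hc⟩) := hπ.map_star ⟨c, hc⟩ _ rfl
      rw [← hst]; exact hπ.map_mul ⟨c, hc⟩ ⟨star c, hcs⟩ _ rfl
    have h3 : ‖π ⟨c, hc⟩‖ * ‖π ⟨c, hc⟩‖ ≤ ‖c‖ * ‖c‖ := by
      calc ‖π ⟨c, hc⟩‖ * ‖π ⟨c, hc⟩‖ = ‖π ⟨c, hc⟩ * star (π ⟨c, hc⟩)‖ :=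
            (CStarRing.norm_self_mul_star).symm
        _ = ‖π ⟨c * star c, hd⟩‖ := by rw [h2]
        _ ≤ ‖c * star c‖ := h1
        _ = ‖c‖ * ‖c‖ := CStarRing.norm_self_mul_star
    nlinarith [norm_nonneg (π ⟨c, hc⟩), norm_nonneg c]
  -- Conclude: π is 1-Lipschitz
  have hlip : LipschitzWith 1 π := by
    refine LipschitzWith.of_dist_le_mul fun x y => ?_
    have hxy : (x : A) - (y : A) ∈ (B : Set A) := sub_mem x.2 y.2
    have h1 : π x = π ⟨(x : A) - (y : A), hxy⟩ + π y :=
      hπ.map_add ⟨(x : A) - (y : A), hxy⟩ y x (sub_add_cancel _ _)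
    calc dist (π x) (π y) = ‖π x - π y‖ := dist_eq_norm _ _
      _ = ‖π ⟨(x : A) - (y : A), hxy⟩‖ := by rw [h1, add_sub_cancel_right]
      _ ≤ ‖(x : A) - (y : A)‖ := contr _ hxy
      _ = 1 * dist x y := by rw [Subtype.dist_eq, dist_eq_norm, one_mul]
  exact hlip.continuous
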